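/- arXiv:math/0601033 — 2 statements merged into one kernel-verified Lean document; each statement's English description precedes it below -/
import Mathlib

section
/- Let v ∈ ℂ, v ≠ 0. In the change of variables z = 1/p (for p ≠ 0), the equation ż = −vz² + iεz C^φ(z,z̄,ε) − εz² C^p(z,z̄,ε), with C^φ, C^p smooth near z = 0, has z = 0 as an equilibrium for every ε, and, provided Im[C^φ(0,0,0)] ≠ 0, it has a second branch of equilibria z(ε) = (i C^φ(0,0,0)/v)ε + O(ε²) for small ε; the two branches cross at ε = 0 (a transcritical bifurcation of equilibria). -/
open Complex

/-- The linearization `(δε, δz) ↦ (δε, δε • a − v δz)` as a continuous linear equivalence. -/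
noncomputable def twEquiv (v a : ℂ) (hv : v ≠ 0) : (ℝ × ℂ) ≃L[ℝ] ℝ × ℂ where
  toFun p := (p.1, p.1 • a - v * p.2)
  invFun q := (q.1, (q.1 • a - q.2) / v)
  map_add' p q := by
    obtain ⟨p1, p2⟩ := p; obtain ⟨q1, q2⟩ := q
    simp only [Prod.mk_add_mk, Prod.mk.injEq]
    refine ⟨trivial, ?_⟩
    simp only [add_smul]; ring
  map_smul' r p := by
    obtain ⟨p1, p2⟩ := p
    simp only [Prod.smul_mk, RingHom.id_apply, Prod.mk.injEq, smul_eq_mul]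
    refine ⟨trivial, ?_⟩
    simp only [smul_sub, smul_smul, Complex.real_smul, smul_eq_mul]
    push_cast; ring
  left_inv p := by
    obtain ⟨p1, p2⟩ := p
    simp only [Prod.mk.injEq, true_and]
    rw [sub_sub_cancel, mul_div_cancel_left₀ _ hv]
  right_inv q := by
    obtain ⟨q1, q2⟩ := q
    simp only [Prod.mk.injEq, true_and]
    rw [mul_div_cancel₀ _ hv, sub_sub_cancel]
  continuous_toFun := by fun_prop
  continuous_invFun := by fun_prop

@[simp] lemma twEquiv_apply (v a : ℂ) (hv : v ≠ 0) (p : ℝ × ℂ) :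
    twEquiv v a hv p = (p.1, p.1 • a - v * p.2) := rfl

@[simp] lemma twEquiv_symm_apply (v a : ℂ) (hv : v ≠ 0) (q : ℝ × ℂ) :
    (twEquiv v a hv).symm q = (q.1, (q.1 • a - q.2) / v) := rfl

/-- The reduced vector field `G(ε,z)` with `twRHS = z · G`. -/
noncomputable def twG (v : ℂ) (Cφ Cp : ℂ → ℂ → ℝ → ℂ) (p : ℝ × ℂ) : ℂ :=
  -v * p.2 + (p.1 • I) * Cφ p.2 ((starRingEnd ℂ) p.2) p.1
    - (p.1 • p.2) * Cp p.2 ((starRingEnd ℂ) p.2) p.1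

/-- RHS of ż = −vz² + iεz C^φ(z,z̄,ε) − εz² C^p(z,z̄,ε). -/
noncomputable def twRHS (v : ℂ) (Cφ Cp : ℂ → ℂ → ℝ → ℂ) (ε : ℝ) (z : ℂ) : ℂ :=
  -v * z ^ 2 + I * ε * z * Cφ z ((starRingEnd ℂ) z) ε
    - ε * z ^ 2 * Cp z ((starRingEnd ℂ) z) ε

lemma twRHS_eq_mul_twG (v : ℂ) (Cφ Cp : ℂ → ℂ → ℝ → ℂ) (ε : ℝ) (z : ℂ) :
    twRHS v Cφ Cp ε z = z * twG v Cφ Cp (ε, z) := by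
  simp only [twRHS, twG, Complex.real_smul]
  ring

lemma abs_le_abs_of_mem_uIcc {t ε : ℝ} (ht : t ∈ Set.uIcc 0 ε) : |t| ≤ |ε| := by
  rcases le_total 0 ε with h | h
  · rw [Set.uIcc_of_le h] at ht
    rw [_root_.abs_of_nonneg ht.1, _root_.abs_of_nonneg h]; exact ht.2
  · rw [Set.uIcc_of_ge h] at ht
    rw [abs_of_nonpos ht.2, abs_of_nonpos h]; exact neg_le_neg ht.1

lemma twG_zero (v : ℂ) (Cφ Cp : ℂ → ℂ → ℝ → ℂ) : twG v Cφ Cp (0, 0) = 0 := by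
  simp [twG]

lemma twG_contDiffAt (v : ℂ) (Cφ Cp : ℂ → ℂ → ℝ → ℂ)
    (hCφ : ContDiffAt ℝ (⊤ : ℕ∞) (fun x : ℂ × ℂ × ℝ => Cφ x.1 x.2.1 x.2.2) (0, 0, 0))
    (hCp : ContDiffAt ℝ (⊤ : ℕ∞) (fun x : ℂ × ℂ × ℝ => Cp x.1 x.2.1 x.2.2) (0, 0, 0)) :
    ContDiffAt ℝ (⊤ : ℕ∞) (twG v Cφ Cp) (0, 0) := by
  have hψ : ContDiff ℝ (⊤ : ℕ∞) (fun p : ℝ × ℂ => ((p.2, (starRingEnd ℂ) p.2, p.1) : ℂ × ℂ × ℝ)) := by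
    refine contDiff_snd.prodMk (ContDiff.prodMk ?_ contDiff_fst)
    exact Complex.conjCLE.contDiff.comp contDiff_snd
  have hpt : (fun p : ℝ × ℂ => ((p.2, (starRingEnd ℂ) p.2, p.1) : ℂ × ℂ × ℝ)) (0, 0)
      = (0, 0, 0) := by simp
  have hF : ContDiffAt ℝ (⊤ : ℕ∞) (fun p : ℝ × ℂ => Cφ p.2 ((starRingEnd ℂ) p.2) p.1) (0, 0) := by
    have := ContDiffAt.comp (0, 0) (hpt ▸ hCφ) hψ.contDiffAt
    exact this
  have hP : ContDiffAt ℝ (⊤ : ℕ∞) (fun p : ℝ × ℂ => Cp p.2 ((starRingEnd ℂ) p.2) p.1) (0, 0) := by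
    have := ContDiffAt.comp (0, 0) (hpt ▸ hCp) hψ.contDiffAt
    exact this
  have h1 : ContDiffAt ℝ (⊤ : ℕ∞) (fun p : ℝ × ℂ => -v * p.2) (0, 0) :=
    (contDiff_const.mul contDiff_snd).contDiffAt
  have h2 : ContDiffAt ℝ (⊤ : ℕ∞) (fun p : ℝ × ℂ => (p.1 • I) * Cφ p.2 ((starRingEnd ℂ) p.2) p.1)
      (0, 0) := ((contDiff_fst.smul contDiff_const).contDiffAt).mul hF
  have h3 : ContDiffAt ℝ (⊤ : ℕ∞) (fun p : ℝ × ℂ => (p.1 • p.2) * Cp p.2 ((starRingEnd ℂ) p.2) p.1)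
      (0, 0) := ((contDiff_fst.smul contDiff_snd).contDiffAt).mul hP
  exact (h1.add h2).sub h3

lemma twG_hasFDerivAt (v : ℂ) (Cφ Cp : ℂ → ℂ → ℝ → ℂ)
    (hCφ : ContDiffAt ℝ (⊤ : ℕ∞) (fun x : ℂ × ℂ × ℝ => Cφ x.1 x.2.1 x.2.2) (0, 0, 0))
    (hCp : ContDiffAt ℝ (⊤ : ℕ∞) (fun x : ℂ × ℂ × ℝ => Cp x.1 x.2.1 x.2.2) (0, 0, 0)) :
    HasFDerivAt (twG v Cφ Cp)
      ((ContinuousLinearMap.fst ℝ ℝ ℂ).smulRight (I * Cφ 0 0 0)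
        - v • ContinuousLinearMap.snd ℝ ℝ ℂ) (0, 0) := by
  classical
  have hψ : ContDiff ℝ (⊤ : ℕ∞) (fun p : ℝ × ℂ => ((p.2, (starRingEnd ℂ) p.2, p.1) : ℂ × ℂ × ℝ)) := by
    refine contDiff_snd.prodMk (ContDiff.prodMk ?_ contDiff_fst)
    exact Complex.conjCLE.contDiff.comp contDiff_snd
  have hpt : (fun p : ℝ × ℂ => ((p.2, (starRingEnd ℂ) p.2, p.1) : ℂ × ℂ × ℝ)) (0, 0)
      = (0, 0, 0) := by simp
  have hF : ContDiffAt ℝ (⊤ : ℕ∞) (fun p : ℝ × ℂ => Cφ p.2 ((starRingEnd ℂ) p.2) p.1) (0, 0) := by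
    have := ContDiffAt.comp (0, 0) (hpt ▸ hCφ) hψ.contDiffAt
    exact this
  have hP : ContDiffAt ℝ (⊤ : ℕ∞) (fun p : ℝ × ℂ => Cp p.2 ((starRingEnd ℂ) p.2) p.1) (0, 0) := by
    have := ContDiffAt.comp (0, 0) (hpt ▸ hCp) hψ.contDiffAt
    exact this
  have hF' := (hF.differentiableAt (by simp)).hasFDerivAt
  have hP' := (hP.differentiableAt (by simp)).hasFDerivAt
  -- linear pieces
  have h1 : HasFDerivAt (fun p : ℝ × ℂ => -v * p.2)
      ((-v) • ContinuousLinearMap.snd ℝ ℝ ℂ) (0, 0) := by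
    have := ((-v) • ContinuousLinearMap.snd ℝ ℝ ℂ).hasFDerivAt (x := ((0, 0) : ℝ × ℂ))
    convert this using 1; funext p; simp
  have hc1 : HasFDerivAt (fun p : ℝ × ℂ => p.1 • I)
      ((ContinuousLinearMap.fst ℝ ℝ ℂ).smulRight I) (0, 0) := by
    have := ((ContinuousLinearMap.fst ℝ ℝ ℂ).smulRight I).hasFDerivAt (x := ((0, 0) : ℝ × ℂ))
    convert this using 1; funext p; simp
  have hc2 : HasFDerivAt (fun p : ℝ × ℂ => p.1 • p.2)
      (((0, 0) : ℝ × ℂ).1 • ContinuousLinearMap.snd ℝ ℝ ℂ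
        + (ContinuousLinearMap.fst ℝ ℝ ℂ).smulRight ((0, 0) : ℝ × ℂ).2) (0, 0) :=
    hasFDerivAt_fst.fun_smul hasFDerivAt_snd
  have h2 := hc1.fun_mul hF'
  have h3 := hc2.fun_mul hP'
  have hD := (h1.fun_add h2).fun_sub h3
  have hfun : twG v Cφ Cp = fun p : ℝ × ℂ =>
      -v * p.2 + (p.1 • I) * Cφ p.2 ((starRingEnd ℂ) p.2) p.1
        - (p.1 • p.2) * Cp p.2 ((starRingEnd ℂ) p.2) p.1 := rfl
  rw [hfun]
  refine hD.congr_fderiv ?_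
  ext p <;>
    simp [ContinuousLinearMap.smul_apply, smul_eq_mul] <;> ring

/-- Transcritical bifurcation of traveling waves: z = 0 is an equilibrium for every ε and,
if Im[C^φ(0,0,0)] ≠ 0, there is a second branch of equilibria
z(ε) = (i C^φ(0,0,0)/v)ε + O(ε²) crossing the trivial branch at ε = 0. -/
theorem traveling_wave_transcritical (v : ℂ) (hv : v ≠ 0)
    (Cφ Cp : ℂ → ℂ → ℝ → ℂ)
    (hCφ : ContDiffAt ℝ (⊤ : ℕ∞) (fun x : ℂ × ℂ × ℝ => Cφ x.1 x.2.1 x.2.2) (0, 0, 0))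
    (hCp : ContDiffAt ℝ (⊤ : ℕ∞) (fun x : ℂ × ℂ × ℝ => Cp x.1 x.2.1 x.2.2) (0, 0, 0)) :
    (∀ ε : ℝ, twRHS v Cφ Cp ε 0 = 0) ∧
    ((Cφ 0 0 0).im ≠ 0 →
      ∃ ε₀ > 0, ∃ C > 0, ∃ ζ : ℝ → ℂ, ζ 0 = 0 ∧
        ∀ ε : ℝ, |ε| < ε₀ →
          twRHS v Cφ Cp ε (ζ ε) = 0 ∧
          ‖ζ ε - (I * Cφ 0 0 0 / v) * ε‖ ≤ C * ε ^ 2) := by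
  constructor
  · intro ε; simp [twRHS]
  intro _hIm
  set a : ℂ := I * Cφ 0 0 0 with ha
  set e := twEquiv v a hv with he
  set Φ : ℝ × ℂ → ℝ × ℂ := fun p => (p.1, twG v Cφ Cp p) with hΦdef
  have hGc := twG_contDiffAt v Cφ Cp hCφ hCp
  have hG' := twG_hasFDerivAt v Cφ Cp hCφ hCp
  have hΦc : ContDiffAt ℝ (⊤ : ℕ∞) Φ (0, 0) := contDiffAt_fst.prodMk hGc
  have hΦ' : HasFDerivAt Φ (e : (ℝ × ℂ) →L[ℝ] ℝ × ℂ) (0, 0) := by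
    have h := (hasFDerivAt_fst (p := ((0, 0) : ℝ × ℂ))).prodMk hG'
    have heq : (e : (ℝ × ℂ) →L[ℝ] ℝ × ℂ) = (ContinuousLinearMap.fst ℝ ℝ ℂ).prod
        ((ContinuousLinearMap.fst ℝ ℝ ℂ).smulRight (I * Cφ 0 0 0)
          - v • ContinuousLinearMap.snd ℝ ℝ ℂ) := by
      refine ContinuousLinearMap.ext fun p => ?_
      simp [he, ha, Prod.ext_iff, ContinuousLinearMap.smul_apply, smul_eq_mul, Complex.real_smul]
    rw [heq]
    exact h
  have hs : HasStrictFDerivAt Φ (e : (ℝ × ℂ) →L[ℝ] ℝ × ℂ) (0, 0) :=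
    hΦc.hasStrictFDerivAt' hΦ' (by simp)
  have hΦ0 : Φ (0, 0) = (0, 0) := by
    have := twG_zero v Cφ Cp
    simp only [hΦdef]
    rw [this]
  set Ψ : ℝ × ℂ → ℝ × ℂ := hs.localInverse Φ e (0, 0) with hΨdef
  have hΨ0 : Ψ (0, 0) = (0, 0) := by
    have := hs.localInverse_apply_image
    rwa [hΦ0] at this
  have hrinv : ∀ᶠ q in nhds ((0, 0) : ℝ × ℂ), Φ (Ψ q) = q := by
    have := hs.eventually_right_inverse
    rwa [hΦ0] at this
  have hΨcd : ContDiffAt ℝ (⊤ : ℕ∞) Ψ (0, 0) := by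
    have := hΦc.to_localInverse hΦ' (by simp)
    rwa [hΦ0] at this
  have hΨ' : HasStrictFDerivAt Ψ ((e.symm : (ℝ × ℂ) →L[ℝ] ℝ × ℂ)) (0, 0) := by
    have := hs.to_localInverse
    rwa [hΦ0] at this
  set ζ : ℝ → ℂ := fun ε => (Ψ (ε, 0)).2 with hζdef
  have hζ0 : ζ 0 = 0 := by
    show (Ψ (0, 0)).2 = 0
    rw [hΨ0]
  -- smoothness of ζ at 0
  have hin : ContDiffAt ℝ (⊤ : ℕ∞) (fun ε : ℝ => ((ε, 0) : ℝ × ℂ)) 0 :=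
    (contDiff_id.prodMk contDiff_const).contDiffAt
  have hcomp : ContDiffAt ℝ (⊤ : ℕ∞) (fun ε : ℝ => Ψ (ε, 0)) 0 := by
    have := ContDiffAt.comp (f := fun ε : ℝ => ((ε, 0) : ℝ × ℂ)) 0 hΨcd hin
    exact this
  have hζcd : ContDiffAt ℝ (⊤ : ℕ∞) ζ 0 := by
    have := contDiffAt_snd.comp 0 hcomp
    exact this
  -- derivative of ζ at 0
  have hj : HasFDerivAt (fun ε : ℝ => ((ε, 0) : ℝ × ℂ)) (ContinuousLinearMap.inl ℝ ℝ ℂ) 0 := by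
    have := (ContinuousLinearMap.inl ℝ ℝ ℂ).hasFDerivAt (x := (0 : ℝ))
    exact this
  have h1 : HasFDerivAt (fun ε : ℝ => Ψ (ε, 0))
      ((e.symm : (ℝ × ℂ) →L[ℝ] ℝ × ℂ).comp (ContinuousLinearMap.inl ℝ ℝ ℂ)) 0 := by
    have := HasFDerivAt.comp (f := fun ε : ℝ => ((ε, 0) : ℝ × ℂ)) 0 hΨ'.hasFDerivAt hj
    exact this
  have h2 : HasFDerivAt ζ ((ContinuousLinearMap.snd ℝ ℝ ℂ).comp
      ((e.symm : (ℝ × ℂ) →L[ℝ] ℝ × ℂ).comp (ContinuousLinearMap.inl ℝ ℝ ℂ))) 0 := by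
    have := HasFDerivAt.comp 0 (ContinuousLinearMap.snd ℝ ℝ ℂ).hasFDerivAt h1
    exact this
  have hζ' : HasDerivAt ζ (a / v) 0 := by
    have := h2.hasDerivAt
    convert this using 1
    simp [he]
  -- the shifted function
  set h : ℝ → ℂ := fun ε => ζ ε - ε • (a / v) with hhdef
  have hhcd : ContDiffAt ℝ (⊤ : ℕ∞) h 0 :=
    hζcd.sub ((contDiff_id.smul contDiff_const).contDiffAt)
  have hh0 : h 0 = 0 := by simp [hhdef, hζ0]
  have hh' : HasDerivAt h 0 0 := by
    have h3 : HasDerivAt (fun ε : ℝ => ε • (a / v)) (a / v) 0 := by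
      have := (hasDerivAt_id (0 : ℝ)).smul_const (a / v)
      simpa using this
    have := hζ'.sub h3; rw [sub_self] at this; exact this
  have hderiv0 : deriv h 0 = 0 := hh'.deriv
  -- local C² control
  obtain ⟨u, hu, hucd⟩ := hhcd.contDiffOn (m := 2) (WithTop.coe_le_coe.2 le_top) (by simp)
  obtain ⟨r, hr, hru⟩ := Metric.mem_nhds_iff.1 hu
  have hball : ContDiffOn ℝ 2 h (Metric.ball 0 r) := hucd.mono hru
  have hd1 : ContDiffOn ℝ 1 (deriv h) (Metric.ball 0 r) :=
    hball.deriv_of_isOpen Metric.isOpen_ball (by norm_num)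
  have hd1at : ContDiffAt ℝ 1 (deriv h) 0 :=
    hd1.contDiffAt (Metric.isOpen_ball.mem_nhds (Metric.mem_ball_self hr))
  obtain ⟨K, t, ht, hK⟩ := hd1at.exists_lipschitzOnWith
  obtain ⟨r₂, hr₂, hr₂sub⟩ := Metric.mem_nhds_iff.1
    (Filter.inter_mem ht (Metric.isOpen_ball.mem_nhds (Metric.mem_ball_self hr)))
  obtain ⟨δ, hδ, hδball⟩ := Metric.eventually_nhds_iff_ball.1 hrinv
  refine ⟨min δ r₂, lt_min hδ hr₂, (K : ℝ) + 1, by positivity, ζ, hζ0, ?_⟩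
  intro ε hε
  have hεδ : |ε| < δ := lt_of_lt_of_le hε (min_le_left _ _)
  have hεr₂ : |ε| < r₂ := lt_of_lt_of_le hε (min_le_right _ _)
  constructor
  · -- equilibrium
    have hmem : ((ε, 0) : ℝ × ℂ) ∈ Metric.ball ((0, 0) : ℝ × ℂ) δ := by
      rw [Metric.mem_ball, Prod.dist_eq]
      simp [Real.dist_eq, max_lt_iff, hεδ, hδ]
    have heq := hδball _ hmem
    have h1' : (Ψ (ε, 0)).1 = ε := congrArg Prod.fst heq
    have h2' : twG v Cφ Cp (Ψ (ε, 0)) = 0 := congrArg Prod.snd heq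
    have hpair : ((ε, ζ ε) : ℝ × ℂ) = Ψ (ε, 0) := by
      rw [hζdef]
      exact Prod.ext h1'.symm rfl
    rw [twRHS_eq_mul_twG, hpair, h2', mul_zero]
  · -- quadratic estimate
    have hsub : Set.uIcc (0 : ℝ) ε ⊆ Metric.ball (0 : ℝ) r₂ := by
      intro x hx
      rw [Metric.mem_ball, Real.dist_eq, sub_zero]
      exact lt_of_le_of_lt (abs_le_abs_of_mem_uIcc hx) hεr₂
    have hsubt : Set.uIcc (0 : ℝ) ε ⊆ t := fun x hx => (hr₂sub (hsub hx)).1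
    have hsubball : Set.uIcc (0 : ℝ) ε ⊆ Metric.ball (0 : ℝ) r := fun x hx =>
      (hr₂sub (hsub hx)).2
    have h0t : (0 : ℝ) ∈ t := (hr₂sub (Metric.mem_ball_self hr₂)).1
    have hders : ∀ x ∈ Set.uIcc (0 : ℝ) ε,
        HasDerivWithinAt h (deriv h x) (Set.uIcc (0 : ℝ) ε) x := by
      intro x hx
      have hdiff : DifferentiableAt ℝ h x :=
        (hball.differentiableOn two_ne_zero).differentiableAt
          (Metric.isOpen_ball.mem_nhds (hsubball hx))
      exact hdiff.hasDerivAt.hasDerivWithinAt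
    have hbound : ∀ x ∈ Set.uIcc (0 : ℝ) ε, ‖deriv h x‖ ≤ (K : ℝ) * |ε| := by
      intro x hx
      have hd := hK.dist_le_mul x (hsubt hx) 0 h0t
      rw [hderiv0, dist_zero_right, Real.dist_eq, sub_zero] at hd
      exact hd.trans (by
        have := abs_le_abs_of_mem_uIcc hx
        nlinarith [K.coe_nonneg])
    have hmvt := Convex.norm_image_sub_le_of_norm_hasDerivWithin_le hders hbound
      (convex_uIcc 0 ε) (Set.left_mem_uIcc) (Set.right_mem_uIcc)
    rw [hh0, sub_zero, sub_zero, Real.norm_eq_abs] at hmvt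
    have hkey : ζ ε - (I * Cφ 0 0 0 / v) * ε = h ε := by
      rw [hhdef]
      simp only [ha, Complex.real_smul]
      ring_nf
    rw [hkey]
    calc ‖h ε‖ ≤ (K : ℝ) * |ε| * |ε| := hmvt
      _ = (K : ℝ) * ε ^ 2 := by rw [mul_assoc, abs_mul_abs_self, sq]
      _ ≤ ((K : ℝ) + 1) * ε ^ 2 := by nlinarith [sq_nonneg ε]
end

section
/- Let j ≥ 1 be an integer, ω ≠ 0, ε small, and G^p : ℝ → ℂ, G^φ : ℝ → ℝ continuous and 2π/j-periodic with ω + εG^φ(φ) > 0 for all φ. Then for every solution (p(t), φ(t)) of ṗ = e^{iφ}[v + εG^p(φ)], φ̇ = ω + εG^φ(φ) there exists T > 0 such that φ(t + T) = φ(t) + 2π/j and p(t + T) = e^{2πi/j} p(t) + c for all t, where c ∈ ℂ is independent of t; moreover if c lies in the range of (1 − e^{2πi/j}) (automatic when j > 1), then after translating p by the fixed point of w ↦ e^{2πi/j}w + c, the tip path p(t) is a periodic curve with discrete ℤ_j spatial symmetry when j > 1. -/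
open Complex Real

/-- Discrete rotating waves under rotational symmetry-breaking: for a solution of
ṗ = e^{iφ}[v + εG^p(φ)], φ̇ = ω + εG^φ(φ) with 2π/j-periodic perturbations and positive
angular speed, there is T > 0 with φ(t+T) = φ(t) + 2π/j and p(t+T) = e^{2πi/j}p(t) + c;
if c ∈ range(1 − e^{2πi/j}), then after recentering, the tip path has discrete ℤ_j
spatial symmetry and is periodic (when j > 1). -/
theorem discrete_rotating_wave_RSB (j : ℕ) (hj : 1 ≤ j)
    (v : ℂ) (ω ε : ℝ)
    (Gp : ℝ → ℂ) (Gφ : ℝ → ℝ) (hGp : Continuous Gp) (hGφ : Continuous Gφ)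
    (hGpper : Function.Periodic Gp (2 * π / j)) (hGφper : Function.Periodic Gφ (2 * π / j))
    (hpos : ∀ φ : ℝ, 0 < ω + ε * Gφ φ)
    (p : ℝ → ℂ) (φ : ℝ → ℝ)
    (hp : ∀ t, HasDerivAt p (exp (I * (φ t)) * (v + ε * Gp (φ t))) t)
    (hφ : ∀ t, HasDerivAt φ (ω + ε * Gφ (φ t)) t) :
    ∃ T > 0, (∀ t, φ (t + T) = φ t + 2 * π / j) ∧
      ∃ c : ℂ, (∀ t, p (t + T) = exp (2 * π * I / j) * p t + c) ∧
        (∀ w₀ : ℂ, (1 - exp (2 * π * I / j)) * w₀ = c → 1 < j →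
          (∀ t, p (t + T) - w₀ = exp (2 * π * I / j) * (p t - w₀)) ∧
          Function.Periodic (fun t => p t - w₀) (j * T)) := by
  set L : ℝ := 2 * π / j with hL
  have hLpos : 0 < L := by
    apply div_pos (by positivity)
    exact_mod_cast Nat.pos_of_ne_zero (by omega)
  set f : ℝ → ℝ := fun x => ω + ε * Gφ x with hf
  have hfc : Continuous f := continuous_const.add (continuous_const.mul hGφ)
  have hfper : ∀ x, f (x + L) = f x := fun x => by simp [hf, hGφper x]
  have hgc : Continuous fun x => (f x)⁻¹ := hfc.inv₀ fun x => (hpos x).ne'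
  set H : ℝ → ℝ := fun x => ∫ s in (0:ℝ)..x, (f s)⁻¹ with hH
  have hHd : ∀ x, HasDerivAt H (f x)⁻¹ x := fun x =>
    (hgc.integral_hasStrictDerivAt 0 x).hasDerivAt
  set T : ℝ := H L with hT
  have hTpos : 0 < T := by
    rw [hT, hH]
    apply intervalIntegral.intervalIntegral_pos_of_pos_on
    · exact hgc.intervalIntegrable 0 L
    · intro x _; exact inv_pos.2 (hpos x)
    · exact hLpos
  -- H(x+L) = H(x) + T
  have hHshift : ∀ x, H (x + L) = H x + T := by
    have hdiff : Differentiable ℝ (fun x => H (x + L) - H x) := fun x =>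
      ((HasDerivAt.comp (h₂ := H) x (hHd (x + L)) ((hasDerivAt_id x).add_const L)).sub (hHd x)).differentiableAt
    have hconst := is_const_of_deriv_eq_zero hdiff (fun x => by
      have : HasDerivAt (fun x => H (x + L) - H x) ((f (x + L))⁻¹ * 1 - (f x)⁻¹) x :=
        (HasDerivAt.comp (h₂ := H) x (hHd (x + L)) ((hasDerivAt_id x).add_const L)).sub (hHd x)
      rw [this.deriv, hfper x]; ring) 
    intro x
    have := hconst x 0
    simp only [zero_add] at this
    have h0 : H 0 = 0 := by simp [hH]
    rw [h0] at this
    linarith [this]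
  -- H(φ t) = t + C
  have hHφ : ∀ t, H (φ t) = t + H (φ 0) := by
    have hdiff : Differentiable ℝ (fun t => H (φ t) - t) := fun t =>
      (((hHd (φ t)).comp t (hφ t)).sub (hasDerivAt_id t)).differentiableAt
    have hconst := is_const_of_deriv_eq_zero hdiff (fun t => by
      have h1 : HasDerivAt (fun t => H (φ t) - t) ((f (φ t))⁻¹ * (f (φ t)) - 1) t :=
        ((hHd (φ t)).comp t (hφ t)).sub (hasDerivAt_id t)
      rw [h1.deriv, inv_mul_cancel₀ (hpos (φ t)).ne']; ring)
    intro t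
    have := hconst t 0
    beta_reduce at this
    linarith [this]
  have hHmono : StrictMono H :=
    strictMono_of_deriv_pos (fun x => by rw [(hHd x).deriv]; exact inv_pos.2 (hpos x))
  have hφshift : ∀ t, φ (t + T) = φ t + L := by
    intro t
    apply hHmono.injective
    rw [hHshift (φ t), hHφ (t + T), hHφ t]; ring
  refine ⟨T, hTpos, hφshift, ?_⟩
  set ρ : ℂ := exp (2 * π * I / j) with hρ
  have hcast : ∀ x : ℝ, Complex.exp (I * ((x + L : ℝ) : ℂ)) = ρ * Complex.exp (I * x) := by
    intro x
    rw [← Complex.exp_add]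
    congr 1
    push_cast [hL]
    have hjne : (j:ℂ) ≠ 0 := Nat.cast_ne_zero.2 (by omega)
    field_simp
    ring
  set q : ℝ → ℂ := fun t => p (t + T) - ρ * p t with hq
  have hqconst : ∀ t, q t = q 0 := by
    have hqd : ∀ t, HasDerivAt q 0 t := by
      intro t
      have hin : HasDerivAt (fun s : ℝ => s + T) 1 t := (hasDerivAt_id t).add_const T
      have h1 : HasDerivAt (fun s => p (s + T))
          ((1:ℝ) • (exp (I * (φ (t + T))) * (v + ε * Gp (φ (t + T))))) t :=
        HasDerivAt.scomp t (hp (t + T)) hin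
      rw [one_smul] at h1
      have h2 := ((hp t).const_mul ρ)
      have h3 := h1.sub h2
      have he : exp (I * (φ (t + T))) * (v + ε * Gp (φ (t + T)))
          - ρ * (exp (I * (φ t)) * (v + ε * Gp (φ t))) = 0 := by
        rw [hφshift t, hcast (φ t)]
        have : Gp (φ t + L) = Gp (φ t) := hGpper (φ t)
        rw [this]
        ring
      rwa [he] at h3
    intro t
    exact is_const_of_deriv_eq_zero (fun t => (hqd t).differentiableAt)
      (fun t => (hqd t).deriv) t 0
  refine ⟨q 0, fun t => ?_, ?_⟩
  · have h := hqconst t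
    simp only [hq] at h
    linear_combination h
  intro w₀ hw₀ hj1
  have hkey : ∀ t, p (t + T) - w₀ = ρ * (p t - w₀) := by
    intro t
    have h1 := hqconst t
    simp only [hq] at h1
    have : (1 - ρ) * w₀ = q 0 := hw₀
    simp only [hq] at this
    linear_combination h1 - this
  refine ⟨hkey, ?_⟩
  have hρj : ρ ^ j = 1 := by
    rw [hρ, ← Complex.exp_nat_mul]
    have hjne : (j:ℂ) ≠ 0 := Nat.cast_ne_zero.2 (by omega)
    rw [show (j:ℂ) * (2 * π * I / j) = 2 * π * I by field_simp]
    exact Complex.exp_two_pi_mul_I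
  have hiter : ∀ n : ℕ, ∀ t, p (t + n * T) - w₀ = ρ ^ n * (p t - w₀) := by
    intro n
    induction n with
    | zero => intro t; simp
    | succ n ih =>
      intro t
      have : t + (n + 1 : ℕ) * T = (t + n * T) + T := by push_cast; ring
      rw [this, hkey (t + n * T), ih t, pow_succ]
      ring
  intro t
  simp only
  rw [show t + (j:ℝ) * T = t + (j:ℕ) * T by push_cast; ring, hiter j t, hρj, one_mul]
end
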